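/- arXiv:0906.2112 — 5 statements merged into one kernel-verified Lean document; each statement's English description precedes it below -/
import Mathlib

section
/- Let K be a field, g ≥ 2 an integer, and a_1, …, a_{2g+2} pairwise distinct elements of K. Let α, β, γ, δ ∈ K with αδ − βγ ≠ 0 and γ·a_r + δ ≠ 0 for every r, and set a'_r := (α·a_r + β)/(γ·a_r + δ). Then the elements a'_1, …, a'_{2g+2} are pairwise distinct, and for all distinct indices i, j, k one has L'_{ijk} = L_{ijk}, where L_{ijk} (resp. L'_{ijk}) is computed from the tuple (a_r) (resp. (a'_r)). In other words, the 2g-th powers of the symmetric roots are invariant under fractional linear changes of the coordinate. -/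
open Finset

/-!
A fractional linear map `x ↦ (αx + β)/(γx + δ)` multiplies differences by a determinant
factor and the denominators: `f x - f y = (αδ - βγ)(x - y) / ((γx + δ)(γy + δ))`. Hence every
difference quotient `(f x - f z)/(f y - f z)` is the old one times `(γy + δ)/(γx + δ)`. In
`L_{ijk}` the first factor picks up `((γa_j + δ)/(γa_i + δ))^{2g}` and each of the `2g` factors
of the product picks up `(γa_i + δ)/(γa_j + δ)`, so these cancel.
-/

/-- The `2g`-th power of the symmetric root `ℓ_{ijk}` attached to the branch
points `a_1, …, a_{2g+2}`:
`L_{ijk} = ((a_i − a_k)/(a_j − a_k))^{2g} · ∏_{r ∉ {i,j}} (a_j − a_r)/(a_i − a_r)`. -/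
noncomputable def symL {K : Type*} [Field K] (g : ℕ) (a : Fin (2 * g + 2) → K)
    (i j k : Fin (2 * g + 2)) : K :=
  ((a i - a k) / (a j - a k)) ^ (2 * g) *
    ∏ r ∈ univ \ {i, j}, (a j - a r) / (a i - a r)

section Moebius

variable {K : Type*} [Field K] (α β γ δ : K)

def moebius (x : K) : K := (α * x + β) / (γ * x + δ)

variable {α β γ δ}

theorem moebius_sub_moebius {x y : K} (hx : γ * x + δ ≠ 0) (hy : γ * y + δ ≠ 0) :
    moebius α β γ δ x - moebius α β γ δ y
      = (α * δ - β * γ) * (x - y) / ((γ * x + δ) * (γ * y + δ)) := by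
  rw [moebius, moebius, div_sub_div _ _ hx hy]
  ring

theorem moebius_inj (hdet : α * δ - β * γ ≠ 0) {x y : K} (hx : γ * x + δ ≠ 0)
    (hy : γ * y + δ ≠ 0) : moebius α β γ δ x = moebius α β γ δ y ↔ x = y := by
  rw [← sub_eq_zero, moebius_sub_moebius hx hy, ← sub_eq_zero (a := x)]
  simp [hdet, hx, hy]

theorem moebius_sub_div_moebius_sub (hdet : α * δ - β * γ ≠ 0) {x y z : K}
    (hx : γ * x + δ ≠ 0) (hy : γ * y + δ ≠ 0) (hz : γ * z + δ ≠ 0) :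
    (moebius α β γ δ x - moebius α β γ δ z) / (moebius α β γ δ y - moebius α β γ δ z)
      = (x - z) / (y - z) * ((γ * y + δ) / (γ * x + δ)) := by
  rw [moebius_sub_moebius hx hz, moebius_sub_moebius hy hz]
  field_simp

end Moebius

theorem symL_eq_of_sub_div_sub {K : Type*} [Field K] {g : ℕ} {a b : Fin (2 * g + 2) → K}
    {w : Fin (2 * g + 2) → K} (hw : ∀ r, w r ≠ 0)
    (hab : ∀ x y z, (b x - b z) / (b y - b z) = (a x - a z) / (a y - a z) * (w y / w x))
    {i j : Fin (2 * g + 2)} (hij : i ≠ j) (k : Fin (2 * g + 2)) :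
    symL g b i j k = symL g a i j k := by
  have hcard : #(univ \ {i, j} : Finset (Fin (2 * g + 2))) = 2 * g := by
    rw [card_sdiff_of_subset (subset_univ _), card_univ, Fintype.card_fin, card_pair hij]
    omega
  have hcancel : (w j / w i) ^ (2 * g) * (w i / w j) ^ (2 * g) = 1 := by
    rw [← mul_pow, div_mul_div_comm, mul_comm (w j), div_self (mul_ne_zero (hw i) (hw j)), one_pow]
  calc symL g b i j k
      = ((a i - a k) / (a j - a k)) ^ (2 * g) * (∏ r ∈ univ \ {i, j}, (a j - a r) / (a i - a r))
          * ((w j / w i) ^ (2 * g) * (w i / w j) ^ (2 * g)) := by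
        simp only [symL, hab, mul_pow, prod_mul_distrib, prod_const, hcard]
        ring
    _ = symL g a i j k := by rw [hcancel, mul_one, symL]

theorem symL_moebius_invariant_general
    {K : Type*} [Field K] (g : ℕ)
    (a : Fin (2 * g + 2) → K) (ha : Function.Injective a)
    (α β γ δ : K) (hdet : α * δ - β * γ ≠ 0) (hden : ∀ r, γ * a r + δ ≠ 0) :
    Function.Injective (fun r => (α * a r + β) / (γ * a r + δ)) ∧
    ∀ i j k : Fin (2 * g + 2), i ≠ j → j ≠ k → i ≠ k →
      symL g (fun r => (α * a r + β) / (γ * a r + δ)) i j k = symL g a i j k := by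
  refine ⟨fun x y hxy => ha ((moebius_inj hdet (hden x) (hden y)).1 hxy), ?_⟩
  intro i j k hij _ _
  exact symL_eq_of_sub_div_sub hden
    (fun x y z => moebius_sub_div_moebius_sub hdet (hden x) (hden y) (hden z)) hij k

/-- the `2g`-th powers of the symmetric roots are invariant under
fractional linear changes of the coordinate. -/
theorem symL_moebius_invariant
    {K : Type*} [Field K] (g : ℕ) (hg : 2 ≤ g)
    (a : Fin (2 * g + 2) → K) (ha : Function.Injective a)
    (α β γ δ : K) (hdet : α * δ - β * γ ≠ 0) (hden : ∀ r, γ * a r + δ ≠ 0) :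
    Function.Injective (fun r => (α * a r + β) / (γ * a r + δ)) ∧
    ∀ i j k : Fin (2 * g + 2), i ≠ j → j ≠ k → i ≠ k →
      symL g (fun r => (α * a r + β) / (γ * a r + δ)) i j k = symL g a i j k :=
  symL_moebius_invariant_general g a ha α β γ δ hdet hden
end

section
/- Let K be a field, g ≥ 2 an integer, and a_1, …, a_{2g+2} pairwise distinct elements of K. Let σ : K → K be a ring homomorphism and π a permutation of the index set {1, …, 2g+2} such that σ(a_r) = a_{π(r)} for all r. If i, j, k are pairwise distinct indices fixed by π (π(i) = i, π(j) = j, π(k) = k), then σ(L_{ijk}) = L_{ijk}. In particular, the 2g-th power of the symmetric root ℓ_{ijk} lies in the field of definition of the triple of Weierstrass points indexed by i, j, k. -/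
/-! `L_{ijk}` is a rational expression in the branch points, so a field map `σ` carries it to
the same expression in the `σ (a r)`; when `σ` permutes the branch points by `π`, reindexing the
product by `π` turns this into `L_{π i, π j, π k}`, which is `L_{ijk}` when `π` fixes `i, j, k`. -/

open Finset

theorem map_symL {K L : Type*} [Field K] [Field L] (σ : K →+* L) (g : ℕ)
    (a : Fin (2 * g + 2) → K) (i j k : Fin (2 * g + 2)) :
    σ (symL g a i j k) = symL g (σ ∘ a) i j k := by
  simp only [symL, map_mul, map_pow, map_div₀, map_sub, map_prod, Function.comp_apply]

theorem symL_comp_perm {K : Type*} [Field K] (g : ℕ) (a : Fin (2 * g + 2) → K)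
    (π : Equiv.Perm (Fin (2 * g + 2))) (i j k : Fin (2 * g + 2)) :
    symL g (a ∘ π) i j k = symL g a (π i) (π j) (π k) := by
  simp only [symL, Function.comp_apply]
  congr 1
  refine prod_equiv π (fun r => ?_) (fun _ _ => rfl)
  simp only [mem_sdiff, mem_univ, mem_insert, mem_singleton, true_and, π.injective.eq_iff]

theorem symL_fixed_by_symmetry_general
    {K : Type*} [Field K] (g : ℕ)
    (a : Fin (2 * g + 2) → K)
    (σ : K →+* K) (π : Equiv.Perm (Fin (2 * g + 2))) (hσ : ∀ r, σ (a r) = a (π r))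
    (i j k : Fin (2 * g + 2))
    (hi : π i = i) (hj : π j = j) (hk : π k = k) :
    σ (symL g a i j k) = symL g a i j k := by
  have hσa : σ ∘ a = a ∘ π := funext hσ
  rw [map_symL, hσa, symL_comp_perm, hi, hj, hk]

/-- if a ring endomorphism `σ` of `K` permutes the branch points by
a permutation `π` fixing `i`, `j`, `k`, then `σ` fixes `L_{ijk}`; in particular
`ℓ_{ijk}^{2g}` lies in the field of definition of the triple of Weierstrass
points indexed by `i, j, k`. -/
theorem symL_fixed_by_symmetry
    {K : Type*} [Field K] (g : ℕ) (hg : 2 ≤ g)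
    (a : Fin (2 * g + 2) → K) (ha : Function.Injective a)
    (σ : K →+* K) (π : Equiv.Perm (Fin (2 * g + 2))) (hσ : ∀ r, σ (a r) = a (π r))
    (i j k : Fin (2 * g + 2)) (hij : i ≠ j) (hjk : j ≠ k) (hik : i ≠ k)
    (hi : π i = i) (hj : π j = j) (hk : π k = k) :
    σ (symL g a i j k) = symL g a i j k :=
  symL_fixed_by_symmetry_general g a σ π hσ i j k hi hj hk
end

section
/- Let K be a field, g ≥ 2 an integer, and a_1, …, a_{2g+2} pairwise distinct elements of K. Then for all pairwise distinct indices i, j, k the cocycle relation L_{ijk} · L_{jki} · L_{kij} = −1 holds, i.e. ℓ_{ijk}^{2g} · ℓ_{jki}^{2g} · ℓ_{kij}^{2g} = −1. -/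
open Finset

/-! Writing `w_i = ∏_{r ≠ i} (a_i − a_r)⁻¹` for the Lagrange nodal weight, the product in
`L_{ijk}` equals `−w_i / w_j`, so in the cyclic product these factors telescope to `(−1)³`. The
three prefactors `(a_i − a_k)/(a_j − a_k)` multiply to `−1` and enter to the even power `2g`. -/

open Lagrange

section NodalWeight

variable {K ι : Type*} [Field K] [DecidableEq ι] {s : Finset ι} {v : ι → K} {i j : ι}

theorem nodalWeight_eq_inv_sub_mul_prod_sdiff (hj : j ∈ s) (hij : i ≠ j) :
    nodalWeight s v i = (v i - v j)⁻¹ * ∏ r ∈ s \ {i, j}, (v i - v r)⁻¹ := by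
  rw [nodalWeight, ← mul_prod_erase _ _ (mem_erase.2 ⟨hij.symm, hj⟩), erase_right_comm,
    sdiff_insert, sdiff_singleton_eq_erase]

theorem prod_sdiff_pair_div_eq_neg_nodalWeight_div (hi : i ∈ s) (hj : j ∈ s)
    (hv : v i ≠ v j) :
    ∏ r ∈ s \ {i, j}, (v j - v r) / (v i - v r) = -(nodalWeight s v i / nodalWeight s v j) := by
  have hij : i ≠ j := fun h => hv (congrArg v h)
  rw [nodalWeight_eq_inv_sub_mul_prod_sdiff hj hij,
    nodalWeight_eq_inv_sub_mul_prod_sdiff hi hij.symm, pair_comm j i, prod_div_distrib,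
    prod_inv_distrib, prod_inv_distrib]
  have : v i - v j ≠ 0 := sub_ne_zero.2 hv
  have : v j - v i ≠ 0 := sub_ne_zero.2 hv.symm
  field_simp
  ring

end NodalWeight

theorem sub_div_sub_mul_cyclic {K : Type*} [Field K] {x y z : K} (hxy : x ≠ y) (hyz : y ≠ z)
    (hxz : x ≠ z) :
    (x - z) / (y - z) * ((y - x) / (z - x)) * ((z - y) / (x - y)) = -1 := by
  have := sub_ne_zero.2 hxy
  have := sub_ne_zero.2 hyz
  have := sub_ne_zero.2 hxz
  have := sub_ne_zero.2 hxz.symm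
  field_simp
  ring

theorem symL_eq_pow_mul_neg_nodalWeight_div {K : Type*} [Field K] {g : ℕ}
    {a : Fin (2 * g + 2) → K} (ha : Function.Injective a) {i j : Fin (2 * g + 2)} (hij : i ≠ j)
    (k : Fin (2 * g + 2)) :
    symL g a i j k = ((a i - a k) / (a j - a k)) ^ (2 * g) *
      -(nodalWeight univ a i / nodalWeight univ a j) := by
  rw [symL, prod_sdiff_pair_div_eq_neg_nodalWeight_div (mem_univ i) (mem_univ j) (ha.ne hij)]

theorem symL_cocycle_general
    {K : Type*} [Field K] (g : ℕ)
    (a : Fin (2 * g + 2) → K) (ha : Function.Injective a)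
    (i j k : Fin (2 * g + 2)) (hij : i ≠ j) (hjk : j ≠ k) (hik : i ≠ k) :
    symL g a i j k * symL g a j k i * symL g a k i j = -1 := by
  have hw : ∀ r, nodalWeight univ a r ≠ 0 := fun r =>
    nodalWeight_ne_zero ha.injOn (mem_univ r)
  have hpow : ((a i - a k) / (a j - a k)) ^ (2 * g) * ((a j - a i) / (a k - a i)) ^ (2 * g) *
      ((a k - a j) / (a i - a j)) ^ (2 * g) = 1 := by
    rw [← mul_pow, ← mul_pow, sub_div_sub_mul_cyclic (ha.ne hij) (ha.ne hjk) (ha.ne hik),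
      (even_two_mul g).neg_one_pow]
  rw [symL_eq_pow_mul_neg_nodalWeight_div ha hij, symL_eq_pow_mul_neg_nodalWeight_div ha hjk,
    symL_eq_pow_mul_neg_nodalWeight_div ha hik.symm]
  calc _ = (((a i - a k) / (a j - a k)) ^ (2 * g) * ((a j - a i) / (a k - a i)) ^ (2 * g) *
        ((a k - a j) / (a i - a j)) ^ (2 * g)) * -(nodalWeight univ a i / nodalWeight univ a j *
          (nodalWeight univ a j / nodalWeight univ a k) *
          (nodalWeight univ a k / nodalWeight univ a i)) := by ring
    _ = -1 := by
      rw [hpow, div_mul_div_cancel₀ (hw j), div_mul_div_cancel₀ (hw k), div_self (hw i)]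
      ring

/-- the cocycle relation
`ℓ_{ijk}^{2g} · ℓ_{jki}^{2g} · ℓ_{kij}^{2g} = −1`. -/
theorem symL_cocycle
    {K : Type*} [Field K] (g : ℕ) (hg : 2 ≤ g)
    (a : Fin (2 * g + 2) → K) (ha : Function.Injective a)
    (i j k : Fin (2 * g + 2)) (hij : i ≠ j) (hjk : j ≠ k) (hik : i ≠ k) :
    symL g a i j k * symL g a j k i * symL g a k i j = -1 :=
  symL_cocycle_general g a ha i j k hij hjk hik
end

section
/- Let K be an algebraically closed field of characteristic different from 2, g ≥ 2 an integer, and a_1, …, a_{2g+2} pairwise distinct elements of K. Let i, j, k be pairwise distinct indices. For each of the pairs (i,k), (j,k), (i,j), choose symmetric roots via some λ with the appropriate 2g-th power condition, and let d_{ik}, d_{jk} denote the corresponding symmetric discriminants and ℓ_{ijk} a symmetric root of the pair (i,j) at index k. Then d_{ik}/d_{jk} = −ℓ_{ijk}^{2g(2g+1)}. (Both sides are independent of all choices of λ, since ℓ_{ijk} is well defined up to a 2g-th root of unity and the exponent 2g(2g+1) is divisible by 2g.) -/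
open Finset

/-- The symmetric root `ℓ_{ijk} = λ·(a_i − a_k)/(a_j − a_k)` attached to the
branch points `a_1, …, a_{2g+2}`, the pair `(i,j)` and a choice of scalar `λ`. -/
noncomputable def symRoot {K : Type*} [Field K] (g : ℕ) (a : Fin (2 * g + 2) → K)
    (i j : Fin (2 * g + 2)) (lam : K) (k : Fin (2 * g + 2)) : K :=
  lam * (a i - a k) / (a j - a k)

/-- The symmetric discriminant `d_{ij} = ∏_{r ≠ s, r,s ∉ {i,j}} (ℓ_{ijr} − ℓ_{ijs})`,
the product taken over ordered pairs of distinct indices `r, s` outside `{i,j}`. -/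
noncomputable def symDisc {K : Type*} [Field K] (g : ℕ) (a : Fin (2 * g + 2) → K)
    (i j : Fin (2 * g + 2)) (lam : K) : K :=
  ∏ r ∈ univ \ {i, j}, ∏ s ∈ (univ \ {i, j}) \ {r},
    (symRoot g a i j lam r - symRoot g a i j lam s)

/-!
Write `w_x = ∏_{r ≠ x} (a_x - a_r)⁻¹` for the nodal weights of the branch points and
`Δ = ∏_{r ≠ s} (a_r - a_s)` for the product over all ordered pairs. The symmetric roots of `(x, y)`
are the image of the `a_r` under a Möbius transformation, so
`ℓ_{xyr} - ℓ_{xys} = λ (a_x - a_y)(a_r - a_s) / ((a_y - a_r)(a_y - a_s))`; together with the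
normalisation `λ^{2g} = -w_x / w_y` this gives `d_{xy} = Δ · ((a_x - a_y)^{2g} w_x w_y)^{2g+1}`.
In the quotient `d_{ik} / d_{jk}` the factors `Δ` and `w_k` cancel, and what remains is
`((-λ_{ij}^{2g}) ((a_i - a_k)/(a_j - a_k))^{2g})^{2g+1} = -ℓ_{ijk}^{2g(2g+1)}` since `2g + 1` is odd.
-/

open Lagrange

section OrderedDisc

variable {ι : Type*} [DecidableEq ι]

def orderedDisc {R : Type*} [CommRing R] (S : Finset ι) (b : ι → R) : R :=
  ∏ r ∈ S, ∏ s ∈ S \ {r}, (b r - b s)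

lemma prod_prod_sdiff_singleton_mul {M : Type*} [CommMonoid M] (S : Finset ι) (f h : ι → M) :
    ∏ r ∈ S, ∏ s ∈ S \ {r}, f r * h s = (∏ r ∈ S, f r * h r) ^ (#S - 1) := by
  have hcard : ∀ r ∈ S, #(S \ {r}) = #S - 1 := fun r hr => by
    rw [sdiff_singleton_eq_erase, card_erase_of_mem hr]
  have hswap : ∏ r ∈ S, ∏ s ∈ S \ {r}, h s = ∏ s ∈ S, ∏ r ∈ S \ {s}, h s :=
    prod_comm' fun _ _ => by simp only [mem_sdiff, mem_singleton]; grind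
  rw [prod_mul_distrib, mul_pow, ← prod_pow, ← prod_pow]
  simp_rw [prod_mul_distrib, hswap]
  congr 1 <;> exact prod_congr rfl fun r hr => by rw [prod_const, hcard r hr]

section CommRing

variable {R : Type*} [CommRing R]

lemma orderedDisc_insert (b : ι → R) {x : ι} {T : Finset ι} (hx : x ∉ T) :
    orderedDisc (insert x T) b = (-1) ^ #T * (∏ s ∈ T, (b x - b s)) ^ 2 * orderedDisc T b := by
  have hinner : ∏ r ∈ T, ∏ s ∈ insert x T \ {r}, (b r - b s) =
      ∏ r ∈ T, ((b r - b x) * ∏ s ∈ T \ {r}, (b r - b s)) :=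
    prod_congr rfl fun r hr => by
      rw [insert_sdiff_of_notMem _ (by simpa using fun h : x = r => hx (h ▸ hr)),
        prod_insert (by simp [hx])]
  have hneg : ∏ r ∈ T, (b r - b x) = (-1) ^ #T * ∏ r ∈ T, (b x - b r) := by
    rw [← prod_neg]; simp only [neg_sub]
  rw [orderedDisc, prod_insert hx, sdiff_singleton_eq_erase, erase_insert hx, hinner,
    prod_mul_distrib, hneg, orderedDisc]
  ring

lemma orderedDisc_insert_insert (b : ι → R) {x y : ι} {T : Finset ι} (hxy : x ≠ y)
    (hx : x ∉ T) (hy : y ∉ T) :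
    orderedDisc (insert x (insert y T)) b =
      -((b x - b y) * (∏ s ∈ T, (b x - b s)) * ∏ s ∈ T, (b y - b s)) ^ 2 * orderedDisc T b := by
  rw [orderedDisc_insert b (by simp [hxy, hx]), orderedDisc_insert b hy, prod_insert hy,
    card_insert_of_notMem hy, pow_succ]
  have hsq : ((-1 : R) ^ #T) ^ 2 = 1 := by rw [← pow_mul, mul_comm, pow_mul]; simp
  linear_combination (-(b x - b y) ^ 2 * (∏ s ∈ T, (b x - b s)) ^ 2 * (∏ s ∈ T, (b y - b s)) ^ 2
    * orderedDisc T b) * hsq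

end CommRing

section Field

variable {K : Type*} [Field K]

lemma orderedDisc_ne_zero {S : Finset ι} {b : ι → K} (hb : Set.InjOn b S) :
    orderedDisc S b ≠ 0 :=
  prod_ne_zero_iff.2 fun _ hr => prod_ne_zero_iff.2 fun _ hs => sub_ne_zero.2 fun h =>
    (mem_sdiff.1 hs).2 (mem_singleton.2 (hb (mem_sdiff.1 hs).1 hr h.symm))

lemma orderedDisc_moebius (S : Finset ι) (b : ι → K) (c u v : K) (hv : ∀ r ∈ S, b r ≠ v) :
    orderedDisc S (fun r => c * (u - b r) / (v - b r)) =
      orderedDisc S b * (∏ r ∈ S, c * (u - v) / (v - b r) ^ 2) ^ (#S - 1) := by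
  have hdiff : ∀ r ∈ S, ∀ s ∈ S \ {r}, c * (u - b r) / (v - b r) - c * (u - b s) / (v - b s) =
      (b r - b s) * (c * (u - v) / (v - b r) * (v - b s)⁻¹) := fun r hr s hs => by
    have := sub_ne_zero.2 (hv r hr).symm
    have := sub_ne_zero.2 (hv s (mem_sdiff.1 hs).1).symm
    field_simp
    ring
  rw [orderedDisc, prod_congr rfl fun r hr => prod_congr rfl (hdiff r hr),
    prod_congr rfl fun r _ => prod_mul_distrib, prod_mul_distrib, prod_prod_sdiff_singleton_mul,
    orderedDisc]
  congr 2
  exact prod_congr rfl fun r _ => by simp only [div_eq_mul_inv, sq, mul_inv]; ring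

end Field

end OrderedDisc

section Univ

variable {ι K : Type*} [Fintype ι] [DecidableEq ι] [Field K] {a : ι → K} {x y : ι}

lemma univ_erase_eq_insert_sdiff_pair (hxy : x ≠ y) :
    (univ : Finset ι).erase x = insert y (univ \ {x, y}) := by
  ext r; by_cases r = x <;> by_cases r = y <;> simp_all

lemma orderedDisc_univ (hxy : x ≠ y) :
    orderedDisc univ a = -((a x - a y) * (∏ r ∈ univ \ {x, y}, (a x - a r)) *
      ∏ r ∈ univ \ {x, y}, (a y - a r)) ^ 2 * orderedDisc (univ \ {x, y}) a := by
  conv_lhs => rw [← insert_erase (mem_univ x), univ_erase_eq_insert_sdiff_pair hxy]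
  exact orderedDisc_insert_insert a hxy (by simp) (by simp)

lemma nodalWeight_univ (hxy : x ≠ y) :
    nodalWeight univ a x = ((a x - a y) * ∏ r ∈ univ \ {x, y}, (a x - a r))⁻¹ := by
  rw [nodalWeight, prod_inv_distrib, univ_erase_eq_insert_sdiff_pair hxy, prod_insert (by simp)]

lemma prod_sdiff_pair_div_eq_neg_nodalWeight_div_s6 (haxy : a x ≠ a y) :
    ∏ r ∈ univ \ {x, y}, (a y - a r) / (a x - a r) =
      -(nodalWeight univ a x / nodalWeight univ a y) := by
  have hxy := ne_of_apply_ne a haxy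
  rw [nodalWeight_univ hxy, nodalWeight_univ hxy.symm, pair_comm y x, prod_div_distrib,
    inv_div_inv, mul_div_mul_comm, ← neg_sub (a x), neg_div_self (sub_ne_zero.2 haxy), neg_one_mul,
    neg_neg]

end Univ

section SymDisc

variable {K : Type*} [Field K] {g : ℕ} {a : Fin (2 * g + 2) → K} {x y : Fin (2 * g + 2)}

lemma symDisc_eq_orderedDisc_sdiff_mul (ha : Function.Injective a) (hxy : x ≠ y) (lam : K) :
    symDisc g a x y lam = orderedDisc (univ \ {x, y}) a *
      (lam ^ (2 * g) * (a x - a y) ^ (2 * g) / (∏ r ∈ univ \ {x, y}, (a y - a r)) ^ 2)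
        ^ (2 * g - 1) := by
  have hS : #(univ \ {x, y}) = 2 * g := by
    rw [card_sdiff_of_subset (subset_univ _), card_pair hxy, card_univ, Fintype.card_fin]; omega
  have hv : ∀ r ∈ univ \ {x, y}, a r ≠ a y := fun r hr =>
    ha.ne fun h => by simp [h] at hr
  change orderedDisc _ (fun r => lam * (a x - a r) / (a y - a r)) = _
  rw [orderedDisc_moebius _ a lam (a x) (a y) hv, hS, prod_div_distrib, prod_mul_distrib,
    prod_const, prod_const, prod_pow, hS]

lemma symDisc_eq_orderedDisc_mul_nodalWeight (hg : 0 < g) (ha : Function.Injective a)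
    (hxy : x ≠ y) {lam : K}
    (hlam : lam ^ (2 * g) = ∏ r ∈ univ \ {x, y}, (a y - a r) / (a x - a r)) :
    symDisc g a x y lam = orderedDisc univ a *
      ((a x - a y) ^ (2 * g) * nodalWeight univ a x * nodalWeight univ a y) ^ (2 * g + 1) := by
  have hmem : ∀ r ∈ univ \ {x, y}, x ≠ r ∧ y ≠ r := fun r hr => by
    simp only [mem_sdiff, mem_univ, mem_insert, mem_singleton, not_or, true_and] at hr
    exact ⟨Ne.symm hr.1, Ne.symm hr.2⟩
  have hP : ∏ r ∈ univ \ {x, y}, (a x - a r) ≠ 0 :=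
    prod_ne_zero_iff.2 fun r hr => sub_ne_zero.2 (ha.ne (hmem r hr).1)
  have hQ : ∏ r ∈ univ \ {x, y}, (a y - a r) ≠ 0 :=
    prod_ne_zero_iff.2 fun r hr => sub_ne_zero.2 (ha.ne (hmem r hr).2)
  have hd : a x - a y ≠ 0 := sub_ne_zero.2 (ha.ne hxy)
  rw [prod_div_distrib] at hlam
  rw [symDisc_eq_orderedDisc_sdiff_mul ha hxy, hlam, orderedDisc_univ hxy, nodalWeight_univ hxy,
    nodalWeight_univ hxy.symm, pair_comm y x, ← neg_sub (a x) (a y)]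
  generalize ∏ r ∈ univ \ {x, y}, (a x - a r) = P at *
  generalize ∏ r ∈ univ \ {x, y}, (a y - a r) = Q at *
  generalize a x - a y = d at *
  obtain ⟨h, rfl⟩ : ∃ h, g = h + 1 := ⟨g - 1, by omega⟩
  have hodd : Odd (2 * (h + 1) + 1) := ⟨h + 1, rfl⟩
  rw [show 2 * (h + 1) - 1 = 2 * h + 1 by omega]
  simp only [neg_mul, inv_neg, mul_neg, hodd.neg_pow, div_pow, mul_pow, inv_pow]
  field_simp
  ring

end SymDisc

theorem symDisc_ratio_eq_neg_symRoot_pow_general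
    {K : Type*} [Field K]
    (g : ℕ) (hg : 2 ≤ g) (a : Fin (2 * g + 2) → K) (ha : Function.Injective a)
    (i j k : Fin (2 * g + 2)) (hij : i ≠ j) (hjk : j ≠ k) (hik : i ≠ k)
    (lamik lamjk lamij : K)
    (hlamik : lamik ^ (2 * g) = ∏ r ∈ univ \ {i, k}, (a k - a r) / (a i - a r))
    (hlamjk : lamjk ^ (2 * g) = ∏ r ∈ univ \ {j, k}, (a k - a r) / (a j - a r))
    (hlamij : lamij ^ (2 * g) = ∏ r ∈ univ \ {i, j}, (a j - a r) / (a i - a r)) :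
    symDisc g a i k lamik / symDisc g a j k lamjk =
      -(symRoot g a i j lamij k) ^ (2 * g * (2 * g + 1)) := by
  have hD : orderedDisc univ a ≠ 0 := orderedDisc_ne_zero ha.injOn
  have hwj := nodalWeight_ne_zero ha.injOn (mem_univ j)
  have hwk := nodalWeight_ne_zero ha.injOn (mem_univ k)
  have hjk' : a j - a k ≠ 0 := sub_ne_zero.2 (ha.ne hjk)
  have hlam : lamij ^ (2 * g) = -(nodalWeight univ a i / nodalWeight univ a j) :=
    hlamij.trans (prod_sdiff_pair_div_eq_neg_nodalWeight_div_s6 (ha.ne hij))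
  have hroot : symRoot g a i j lamij k ^ (2 * g * (2 * g + 1)) =
      (lamij ^ (2 * g)) ^ (2 * g + 1) * ((a i - a k) / (a j - a k)) ^ (2 * g * (2 * g + 1)) := by
    rw [symRoot, mul_div_assoc, mul_pow, pow_mul]
  rw [symDisc_eq_orderedDisc_mul_nodalWeight (by omega) ha hik hlamik,
    symDisc_eq_orderedDisc_mul_nodalWeight (by omega) ha hjk hlamjk, mul_div_mul_left _ _ hD,
    ← div_pow, hroot, hlam, (odd_two_mul_add_one g).neg_pow, pow_mul _ (2 * g), neg_mul, neg_neg,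
    ← mul_pow]
  congr 1
  rw [div_pow]
  field_simp

/-- the formula `d_{ik}/d_{jk} = −ℓ_{ijk}^{2g(2g+1)}` relating
symmetric discriminants and symmetric roots. -/
theorem symDisc_ratio_eq_neg_symRoot_pow
    {K : Type*} [Field K] [IsAlgClosed K] (hchar : (2 : K) ≠ 0)
    (g : ℕ) (hg : 2 ≤ g) (a : Fin (2 * g + 2) → K) (ha : Function.Injective a)
    (i j k : Fin (2 * g + 2)) (hij : i ≠ j) (hjk : j ≠ k) (hik : i ≠ k)
    (lamik lamjk lamij : K)
    (hlamik : lamik ^ (2 * g) = ∏ r ∈ univ \ {i, k}, (a k - a r) / (a i - a r))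
    (hlamjk : lamjk ^ (2 * g) = ∏ r ∈ univ \ {j, k}, (a k - a r) / (a j - a r))
    (hlamij : lamij ^ (2 * g) = ∏ r ∈ univ \ {i, j}, (a j - a r) / (a i - a r)) :
    symDisc g a i k lamik / symDisc g a j k lamjk =
      -(symRoot g a i j lamij k) ^ (2 * g * (2 * g + 1)) :=
  symDisc_ratio_eq_neg_symRoot_pow_general g hg a ha i j k hij hjk hik lamik lamjk lamij hlamik
    hlamjk hlamij
end

section
/- Let R be a discrete valuation ring with normalized additive valuation v. Let p, q ∈ R[X] and set f = p² + 4q. Suppose f = b·∏_{r=1}^{d} (X − a_r) with b a unit of R, d ≥ 1, and a_1, …, a_d pairwise distinct elements of R, and suppose that v(∏_{s ≠ t} (a_s − a_t)) = d·v(4), the product being over ordered pairs of distinct indices s, t in {1, …, d}. Then v(f'(a_r)) = v(4) for every r = 1, …, d; in particular, for all indices i, j the element f'(a_j)/f'(a_i) is a unit of R. -/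
/-!
Each root `x` of `f = p² + 4q` satisfies `p(x)² = -4q(x)`, so `2 ∣ p(x)` because `R` is integrally
closed, and hence `4 ∣ f'(x) = 2p(x)p'(x) + 4q'(x)`. On the other hand
`f'(a_r) = b ∏_{t ≠ r} (a_r - a_t)`, so the `d` valuations `v(f'(a_r))`, each at least `v(4)`,
add up to `d • v(4)`; therefore they all equal `v(4)`, and elements of equal valuation are associated.
-/

open Finset Polynomial

theorem AddValuation.map_finsetProd {R Γ₀ ι : Type*} [CommRing R]
    [LinearOrderedAddCommMonoidWithTop Γ₀] (v : AddValuation R Γ₀) (s : Finset ι) (f : ι → R) :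
    v (∏ i ∈ s, f i) = ∑ i ∈ s, v (f i) := by
  classical
  induction s using Finset.induction with
  | empty => simp
  | insert i s hi ih => rw [prod_insert hi, sum_insert hi, v.map_mul, ih]

theorem ENat.eq_of_le_of_sum_eq_card_nsmul {ι : Type*} {s : Finset ι} {f : ι → ℕ∞} {m : ℕ∞}
    (hle : ∀ i ∈ s, m ≤ f i) (hsum : ∑ i ∈ s, f i = #s • m) : ∀ i ∈ s, f i = m := by
  rcases eq_or_ne m ⊤ with rfl | hm
  · exact fun i hi => top_le_iff.1 (hle i hi)
  have hcancel : AddLECancellable (#s • m) := by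
    lift m to ℕ using hm
    exact ENat.addLECancellable_of_ne_top (by exact_mod_cast ENat.natCast_ne_top (#s * m))
  have hexcess : ∑ i ∈ s, (f i - m) = 0 := hcancel.inj.1 <| calc
    #s • m + ∑ i ∈ s, (f i - m) = ∑ i ∈ s, (m + (f i - m)) := by rw [sum_add_distrib, sum_const]
    _ = ∑ i ∈ s, f i := sum_congr rfl fun i hi => add_tsub_cancel_of_le (hle i hi)
    _ = #s • m + 0 := by rw [hsum, add_zero]
  intro i hi
  exact le_antisymm (tsub_eq_zero_iff_le.1 (sum_eq_zero_iff.1 hexcess i hi)) (hle i hi)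

theorem eval_derivative_prod_X_sub_C {R ι : Type*} [CommRing R] [Fintype ι] [DecidableEq ι]
    (a : ι → R) (r : ι) :
    (derivative (∏ t, (X - C (a t)))).eval (a r) = ∏ t ∈ univ \ {r}, (a r - a t) := by
  have hnodal : ∏ t, (X - C (a t)) = Lagrange.nodal univ a := rfl
  rw [hnodal, Lagrange.eval_nodal_derivative_eval_node_eq (mem_univ r), Lagrange.eval_nodal,
    sdiff_singleton_eq_erase]

theorem four_dvd_eval_derivative_of_isRoot {R : Type*} [CommRing R] [IsDomain R]
    [IsIntegrallyClosed R] {p q : R[X]} {x : R} (hx : (p ^ 2 + 4 * q).IsRoot x) :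
    4 ∣ (derivative (p ^ 2 + 4 * q)).eval x := by
  have hx' : (p.eval x) ^ 2 = 4 * -q.eval x := by
    have := hx.eq_zero
    simp only [eval_add, eval_pow, eval_mul, eval_ofNat] at this
    linear_combination this
  obtain ⟨c, hc⟩ : 2 ∣ p.eval x :=
    (IsIntegrallyClosed.pow_dvd_pow_iff two_ne_zero).1 ⟨-q.eval x, by rw [hx']; norm_num⟩
  refine ⟨c * (derivative p).eval x + (derivative q).eval x, ?_⟩
  simp only [derivative_add, derivative_sq, derivative_mul, derivative_ofNat, eval_add, eval_C,
    eval_zero, eval_mul, eval_ofNat, hc]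
  ring

open IsDiscreteValuationRing

theorem addVal_derivative_eq_addVal_four_general
    {R : Type*} [CommRing R] [IsDomain R] [IsDiscreteValuationRing R]
    (p q : R[X]) (b : R) (hb : IsUnit b) (d : ℕ)
    (a : Fin d → R)
    (hf : p ^ 2 + 4 * q = C b * ∏ r, (X - C (a r)))
    (hval : IsDiscreteValuationRing.addVal R
        (∏ s : Fin d, ∏ t ∈ univ \ {s}, (a s - a t)) =
      d • IsDiscreteValuationRing.addVal R (4 : R)) :
    (∀ r, IsDiscreteValuationRing.addVal R
        ((derivative (p ^ 2 + 4 * q)).eval (a r)) =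
      IsDiscreteValuationRing.addVal R (4 : R)) ∧
    ∀ i j, ∃ u : Rˣ, (derivative (p ^ 2 + 4 * q)).eval (a j) =
      u * (derivative (p ^ 2 + 4 * q)).eval (a i) := by
  have hderiv (r : Fin d) :
      (derivative (p ^ 2 + 4 * q)).eval (a r) = b * ∏ t ∈ univ \ {r}, (a r - a t) := by
    rw [hf, derivative_C_mul, eval_mul, eval_C, eval_derivative_prod_X_sub_C]
  have hle (r : Fin d) : addVal R 4 ≤ addVal R ((derivative (p ^ 2 + 4 * q)).eval (a r)) :=
    addVal_le_iff_dvd.2 <| four_dvd_eval_derivative_of_isRoot <| by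
      rw [IsRoot, hf, eval_mul, eval_prod]
      exact mul_eq_zero_of_right _ (prod_eq_zero (mem_univ r) (by simp))
  have hsum : ∑ r, addVal R ((derivative (p ^ 2 + 4 * q)).eval (a r)) =
      #(univ : Finset (Fin d)) • addVal R 4 := by
    simp only [hderiv, addVal_mul, addVal_eq_zero_iff.2 hb, zero_add, card_univ, Fintype.card_fin]
    rw [← AddValuation.map_finsetProd, hval]
  have heq (r : Fin d) := ENat.eq_of_le_of_sum_eq_card_nsmul (fun s _ => hle s) hsum r (mem_univ r)
  refine ⟨heq, fun i j => ?_⟩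
  obtain ⟨u, hu⟩ := (addVal_eq_iff_associated _ _).1 ((heq i).trans (heq j).symm)
  exact ⟨u, by rw [← hu, mul_comm]⟩

/-- in a discrete valuation ring `R`, if `f = p² + 4q` splits as
`b·∏_{r=1}^{d}(X − a_r)` with `b` a unit and the `a_r` pairwise distinct
elements of `R`, and `v(∏_{s ≠ t}(a_s − a_t)) = d·v(4)`, then
`v(f'(a_r)) = v(4)` for every `r`; in particular `f'(a_j)/f'(a_i)` is a unit
of `R` for all `i, j`. -/
theorem addVal_derivative_eq_addVal_four
    {R : Type*} [CommRing R] [IsDomain R] [IsDiscreteValuationRing R]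
    (p q : R[X]) (b : R) (hb : IsUnit b) (d : ℕ) (hd : 1 ≤ d)
    (a : Fin d → R) (ha : Function.Injective a)
    (hf : p ^ 2 + 4 * q = C b * ∏ r, (X - C (a r)))
    (hval : IsDiscreteValuationRing.addVal R
        (∏ s : Fin d, ∏ t ∈ univ \ {s}, (a s - a t)) =
      d • IsDiscreteValuationRing.addVal R (4 : R)) :
    (∀ r, IsDiscreteValuationRing.addVal R
        ((derivative (p ^ 2 + 4 * q)).eval (a r)) =
      IsDiscreteValuationRing.addVal R (4 : R)) ∧
    ∀ i j, ∃ u : Rˣ, (derivative (p ^ 2 + 4 * q)).eval (a j) =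
      u * (derivative (p ^ 2 + 4 * q)).eval (a i) :=
  addVal_derivative_eq_addVal_four_general p q b hb d a hf hval
end
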